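/- With notation as follows, fix 1 ≤ c < d ≤ n. Define ψ(B,C) := Σ_{i=1}^{n−1}(BC)_{i,i+1}, let B_{pq} := E_{pq}+E_{qp} if 1 ≤ p < q ≤ n, B_{pp} := E_{pp} if 1 ≤ p ≤ n, and B_{pq} := 0 otherwise; let C_{cd} := E_{cd} − E_{dc}. Then Σ_{k=0}^{n} ψ(B_{c+k, d−k−1}, C_{cd}) = 1. -/

import Mathlib

open Finset Matrix

/-- The elementary matrix `E_{pq}` in 1-based indexing, defined to be `0`
unless `1 ≤ p, q ≤ n`. -/
noncomputable def Eint (n : ℕ) (p q : ℤ) : Matrix (Fin n) (Fin n) ℂ :=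
  if h : 1 ≤ p ∧ p ≤ (n : ℤ) ∧ 1 ≤ q ∧ q ≤ (n : ℤ) then
    Matrix.single ⟨(p - 1).toNat, by omega⟩ ⟨(q - 1).toNat, by omega⟩ 1
  else 0

/-- `B_{pq} = E_{pq} + E_{qp}` for `p < q`, `B_{pp} = E_{pp}`, and `0` otherwise. -/
noncomputable def Bmat (n : ℕ) (p q : ℤ) : Matrix (Fin n) (Fin n) ℂ :=
  if p < q then Eint n p q + Eint n q p else if p = q then Eint n p p else 0

/-- `C_{pq} = E_{pq} - E_{qp}` if `1 ≤ p < q ≤ n`, and `0` otherwise. -/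
noncomputable def Cmat (n : ℕ) (p q : ℤ) : Matrix (Fin n) (Fin n) ℂ :=
  if p < q then Eint n p q - Eint n q p else 0

/-- `ψ(B, C) = Σ_{i=1}^{n-1} (BC)_{i,i+1}`, the sum of the superdiagonal
entries of `B * C`. -/
noncomputable def psi (n : ℕ) (B C : Matrix (Fin n) (Fin n) ℂ) : ℂ :=
  ∑ i : Fin n, if h : (i : ℕ) + 1 < n then (B * C) i ⟨(i : ℕ) + 1, h⟩ else 0

/-! By bilinearity, `ψ(B_{pq}, C_{cd})` splits into values `ψ(E_{pq}, E_{rs})`, and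
`ψ(E_{pq}, E_{rs}) = 1` exactly when `q = r` and `s = p + 1` (all indices in range), else `0`.
Hence `ψ(B_{pq}, C_{cd}) = [p = c ∧ q = d - 1] - [p = c - 1 ≥ 1 ∧ q = d]` for all `p, q`, and along
`p = c + k`, `q = d - k - 1` only the term `k = 0` survives. -/

lemma Fin.sum_ite_intCast_eq {M : Type*} [AddCommMonoid M] (n : ℕ) (t : ℤ) (a : M) :
    ∑ m : Fin n, (if (m : ℤ) = t then a else 0) = if 0 ≤ t ∧ t < n then a else 0 := by
  split_ifs with ht
  · rw [Fintype.sum_eq_single ⟨t.toNat, by omega⟩ fun m hm =>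
      if_neg fun h => hm (Fin.ext (by simp only; omega))]
    simp [ht.1]
  · exact Finset.sum_eq_zero fun m _ => if_neg (by omega)

lemma Eint_apply (n : ℕ) (p q : ℤ) (i j : Fin n) :
    Eint n p q i j = if p = (i : ℤ) + 1 ∧ q = (j : ℤ) + 1 then 1 else 0 := by
  unfold Eint
  split_ifs <;> simp only [Matrix.single_apply, Fin.ext_iff, Matrix.zero_apply]
  · rw [if_pos (by omega)]
  · rw [if_neg (by omega)]
  · omega

lemma Eint_mul_Eint (n : ℕ) (p q r s : ℤ) :
    Eint n p q * Eint n r s = if q = r ∧ 1 ≤ q ∧ q ≤ n then Eint n p s else 0 := by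
  ext i j
  have hterm : ∀ m : Fin n, Eint n p q i m * Eint n r s m j =
      if (m : ℤ) = q - 1 then (if p = (i : ℤ) + 1 ∧ q = r ∧ s = (j : ℤ) + 1 then 1 else 0) else 0 := by
    intro m
    simp only [Eint_apply]
    split_ifs <;> first | omega | simp
  rw [Matrix.mul_apply, Finset.sum_congr rfl fun m _ => hterm m, Fin.sum_ite_intCast_eq,
    apply_ite (fun A : Matrix (Fin n) (Fin n) ℂ => A i j), Eint_apply, Matrix.zero_apply]
  split_ifs <;> first | rfl | omega

noncomputable def superdiagSum (n : ℕ) : Matrix (Fin n) (Fin n) ℂ →ₗ[ℂ] ℂ :=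
  ∑ i : Fin n, if h : (i : ℕ) + 1 < n then Matrix.entryLinearMap ℂ ℂ i ⟨i + 1, h⟩ else 0

lemma psi_eq_superdiagSum (n : ℕ) (B C : Matrix (Fin n) (Fin n) ℂ) :
    psi n B C = superdiagSum n (B * C) := by
  rw [psi, superdiagSum, LinearMap.sum_apply]
  refine Finset.sum_congr rfl fun i _ => ?_
  split_ifs <;> rfl

lemma superdiagSum_Eint (n : ℕ) (p q : ℤ) :
    superdiagSum n (Eint n p q) = if q = p + 1 ∧ 1 ≤ p ∧ p < n then 1 else 0 := by
  rw [superdiagSum, LinearMap.sum_apply]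
  have hterm : ∀ i : Fin n,
      (if h : (i : ℕ) + 1 < n then Matrix.entryLinearMap ℂ ℂ i ⟨i + 1, h⟩ else 0) (Eint n p q) =
        if (i : ℤ) = p - 1 then (if q = p + 1 ∧ p < n then 1 else 0) else 0 := by
    intro i
    split_ifs <;> simp_all [Eint_apply] <;> omega
  rw [Finset.sum_congr rfl fun i _ => hterm i, Fin.sum_ite_intCast_eq]
  split_ifs <;> first | rfl | omega

lemma psi_Eint_Eint (n : ℕ) (p q r s : ℤ) :
    psi n (Eint n p q) (Eint n r s) =
      if q = r ∧ 1 ≤ q ∧ q ≤ n ∧ s = p + 1 ∧ 1 ≤ p ∧ p < n then 1 else 0 := by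
  rw [psi_eq_superdiagSum, Eint_mul_Eint]
  by_cases hq : q = r ∧ 1 ≤ q ∧ q ≤ n
  · rw [if_pos hq, superdiagSum_Eint]
    exact if_congr (by omega) rfl rfl
  · rw [if_neg hq, map_zero, if_neg (by omega)]

lemma psi_add_left (n : ℕ) (A B C : Matrix (Fin n) (Fin n) ℂ) :
    psi n (A + B) C = psi n A C + psi n B C := by
  simp only [psi_eq_superdiagSum, add_mul, map_add]

lemma psi_sub_right (n : ℕ) (A B C : Matrix (Fin n) (Fin n) ℂ) :
    psi n A (B - C) = psi n A B - psi n A C := by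
  simp only [psi_eq_superdiagSum, mul_sub, map_sub]

lemma psi_zero_left (n : ℕ) (C : Matrix (Fin n) (Fin n) ℂ) : psi n 0 C = 0 := by
  rw [psi_eq_superdiagSum, zero_mul, map_zero]

lemma psi_Bmat_Cmat (n : ℕ) (p q c d : ℤ) (hc : 1 ≤ c) (hcd : c < d) (hd : d ≤ n) :
    psi n (Bmat n p q) (Cmat n c d) =
      (if p = c ∧ q = d - 1 then 1 else 0) - (if p + 1 = c ∧ q = d ∧ 1 ≤ p then 1 else 0) := by
  rw [Cmat, if_pos hcd]
  rcases lt_trichotomy p q with hlt | rfl | hgt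
  · rw [Bmat, if_pos hlt, psi_add_left, psi_sub_right, psi_sub_right, psi_Eint_Eint,
      psi_Eint_Eint, psi_Eint_Eint, psi_Eint_Eint]
    split_ifs <;> first | omega | norm_num
  · rw [Bmat, if_neg (lt_irrefl p), if_pos rfl, psi_sub_right, psi_Eint_Eint, psi_Eint_Eint]
    split_ifs <;> first | omega | norm_num
  · rw [Bmat, if_neg hgt.not_gt, if_neg hgt.ne', psi_zero_left, if_neg (by omega),
      if_neg (by omega), sub_zero]

/-- `Σ_{k=0}^{n} ψ(B_{c+k, d-k-1}, C_{cd}) = 1` (equation (5.7)). -/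
theorem zeta_y_ybar (n c d : ℕ) (h1 : 1 ≤ c) (h2 : c < d) (h3 : d ≤ n) :
    ∑ k ∈ Finset.range (n + 1),
      psi n (Bmat n ((c : ℤ) + k) ((d : ℤ) - k - 1)) (Cmat n c d) = 1 := by
  have hterm : ∀ k : ℕ,
      psi n (Bmat n ((c : ℤ) + k) ((d : ℤ) - k - 1)) (Cmat n c d) = if k = 0 then 1 else 0 := by
    intro k
    rw [psi_Bmat_Cmat n _ _ c d (by exact_mod_cast h1) (by exact_mod_cast h2) (by exact_mod_cast h3)]
    split_ifs <;> first | omega | norm_num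
  rw [Finset.sum_congr rfl fun k _ => hterm k, Finset.sum_ite_eq',
    if_pos (Finset.mem_range.2 n.succ_pos)]
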